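/- arXiv:2306.01801 — 2 statements merged into one kernel-verified Lean document; each statement's English description precedes it below -/
import Mathlib

section
/- (Theorem 2) The forward- and backward-dependent factorized (low-rank) CDM ranking models are equivalent under the bijection g: for every parameter θ = (δ, β, T, C), every covariate function x : 𝒰 → ℝ^d, every choice set S ⊆ 𝒰 with |S| ≥ 2, and every j ∈ S, the forward-dependent choice probability under θ equals the backward-dependent choice probability under g(θ), i.e. exp(V^F_θ(j|S)) / Σ_{k ∈ S} exp(V^F_θ(k|S)) = exp(V^B_{g(θ)}(j|S)) / Σ_{k ∈ S} exp(V^B_{g(θ)}(k|S)). -/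
open Finset

/-- Forward-dependent representative utility of the factorized (low-rank) CDM:
`V^F_θ(j|S) = δ_j + β·x_j + t_jᵀ (Σ_{l ∈ S, l ≠ j} c_l)`. -/
noncomputable def VFlow {𝒰 : Type*} [DecidableEq 𝒰] {d r : ℕ}
    (δ : 𝒰 → ℝ) (β : Fin d → ℝ) (t c : 𝒰 → Fin r → ℝ)
    (x : 𝒰 → Fin d → ℝ) (S : Finset 𝒰) (j : 𝒰) : ℝ :=
  δ j + (∑ i, β i * x j i) + ∑ k, t j k * ∑ l ∈ S.erase j, c l k

/-- Backward-dependent representative utility of the factorized (low-rank) CDM: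
`V^B_θ(j|S) = δ_j + β·x_j + t_jᵀ (Σ_{l ∈ 𝒰 \ S} c_l)`. -/
noncomputable def VBlow {𝒰 : Type*} [Fintype 𝒰] [DecidableEq 𝒰] {d r : ℕ}
    (δ : 𝒰 → ℝ) (β : Fin d → ℝ) (t c : 𝒰 → Fin r → ℝ)
    (x : 𝒰 → Fin d → ℝ) (S : Finset 𝒰) (j : 𝒰) : ℝ :=
  δ j + (∑ i, β i * x j i) + ∑ k, t j k * ∑ l ∈ Sᶜ, c l k

/-- The parameter map `g` of the factorized (low-rank) CDM, sending `(δ, β, T, C)` to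
`({δ_i + t_iᵀ (Σ_{j ≠ i} c_j)}_i, β, T, −C)`. -/
noncomputable def cdmG (𝒰 : Type*) [Fintype 𝒰] [DecidableEq 𝒰] (d r : ℕ) :
    ((𝒰 → ℝ) × (Fin d → ℝ) × (𝒰 → Fin r → ℝ) × (𝒰 → Fin r → ℝ)) →
      ((𝒰 → ℝ) × (Fin d → ℝ) × (𝒰 → Fin r → ℝ) × (𝒰 → Fin r → ℝ)) :=
  fun θ =>
    (fun i => θ.1 i + ∑ k, θ.2.2.1 i k * ∑ j ∈ Finset.univ.erase i, θ.2.2.2 j k,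
      θ.2.1, θ.2.2.1, fun j k => -θ.2.2.2 j k)

theorem Finset.sum_univ_erase_eq_sum_erase_add_sum_compl {α M : Type*} [Fintype α]
    [DecidableEq α] [AddCommMonoid M] {S : Finset α} {k : α} (hk : k ∈ S) (f : α → M) :
    ∑ l ∈ univ.erase k, f l = ∑ l ∈ S.erase k, f l + ∑ l ∈ Sᶜ, f l := by
  rw [← union_compl S, erase_union_distrib, erase_eq_of_notMem (notMem_compl.2 hk),
    sum_union (disjoint_compl_right.mono_left (erase_subset k S))]

/-- On the choice set, `g` turns the backward-dependent utilities into the forward-dependent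
ones exactly: the shift of `δ` by all of `C` cancels against the flipped sign of `C` off `S`. -/
theorem VBlow_cdmG_eq_VFlow {𝒰 : Type*} [Fintype 𝒰] [DecidableEq 𝒰] {d r : ℕ}
    (θ : (𝒰 → ℝ) × (Fin d → ℝ) × (𝒰 → Fin r → ℝ) × (𝒰 → Fin r → ℝ))
    (x : 𝒰 → Fin d → ℝ) {S : Finset 𝒰} {k : 𝒰} (hk : k ∈ S) :
    VBlow (cdmG 𝒰 d r θ).1 (cdmG 𝒰 d r θ).2.1 (cdmG 𝒰 d r θ).2.2.1 (cdmG 𝒰 d r θ).2.2.2 x S k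
      = VFlow θ.1 θ.2.1 θ.2.2.1 θ.2.2.2 x S k := by
  simp only [VBlow, VFlow, cdmG, sum_univ_erase_eq_sum_erase_add_sum_compl hk, sum_neg_distrib,
    mul_add, mul_neg, sum_add_distrib]
  ring

theorem lowrank_cdm_forward_eq_backward_prob_general
    (𝒰 : Type*) [Fintype 𝒰] [DecidableEq 𝒰] (d r : ℕ)
    (θ : (𝒰 → ℝ) × (Fin d → ℝ) × (𝒰 → Fin r → ℝ) × (𝒰 → Fin r → ℝ))
    (x : 𝒰 → Fin d → ℝ) (S : Finset 𝒰) (j : 𝒰) (hj : j ∈ S) :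
    Real.exp (VFlow θ.1 θ.2.1 θ.2.2.1 θ.2.2.2 x S j) /
        ∑ k ∈ S, Real.exp (VFlow θ.1 θ.2.1 θ.2.2.1 θ.2.2.2 x S k)
      = Real.exp (VBlow (cdmG 𝒰 d r θ).1 (cdmG 𝒰 d r θ).2.1 (cdmG 𝒰 d r θ).2.2.1
            (cdmG 𝒰 d r θ).2.2.2 x S j) /
          ∑ k ∈ S, Real.exp (VBlow (cdmG 𝒰 d r θ).1 (cdmG 𝒰 d r θ).2.1 (cdmG 𝒰 d r θ).2.2.1
            (cdmG 𝒰 d r θ).2.2.2 x S k) := by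
  rw [VBlow_cdmG_eq_VFlow θ x hj,
    sum_congr rfl fun k hk => congrArg Real.exp (VBlow_cdmG_eq_VFlow θ x hk)]

/-- (Theorem 2) The forward- and backward-dependent factorized (low-rank) CDM ranking models
are equivalent under the bijection `g`: for every `θ = (δ, β, T, C)`, covariates `x`, choice
set `S` with `|S| ≥ 2`, and `j ∈ S`, the forward-dependent choice probability under `θ`
equals the backward-dependent choice probability under `g(θ)`. -/
theorem lowrank_cdm_forward_eq_backward_prob
    (𝒰 : Type*) [Fintype 𝒰] [DecidableEq 𝒰] (d r : ℕ)
    (θ : (𝒰 → ℝ) × (Fin d → ℝ) × (𝒰 → Fin r → ℝ) × (𝒰 → Fin r → ℝ))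
    (x : 𝒰 → Fin d → ℝ) (S : Finset 𝒰) (hS : 2 ≤ S.card) (j : 𝒰) (hj : j ∈ S) :
    Real.exp (VFlow θ.1 θ.2.1 θ.2.2.1 θ.2.2.2 x S j) /
        ∑ k ∈ S, Real.exp (VFlow θ.1 θ.2.1 θ.2.2.1 θ.2.2.2 x S k)
      = Real.exp (VBlow (cdmG 𝒰 d r θ).1 (cdmG 𝒰 d r θ).2.1 (cdmG 𝒰 d r θ).2.2.1
            (cdmG 𝒰 d r θ).2.2.2 x S j) /
          ∑ k ∈ S, Real.exp (VBlow (cdmG 𝒰 d r θ).1 (cdmG 𝒰 d r θ).2.1 (cdmG 𝒰 d r θ).2.2.1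
            (cdmG 𝒰 d r θ).2.2.2 x S k) :=
  lowrank_cdm_forward_eq_backward_prob_general 𝒰 d r θ x S j hj
end

section
/- The forward- and backward-dependent factorized (low-rank) CDM model classes coincide: for every parameter θ_F = (δ, β, T, C) there exists a parameter θ_B such that for all covariates x : 𝒰 → ℝ^d, all choice sets S ⊆ 𝒰 with |S| ≥ 2, and all j ∈ S, the forward-dependent choice probability under θ_F equals the backward-dependent choice probability under θ_B; and conversely, for every θ_B there exists θ_F with the same property. -/
open Finset

/-! Since `Σ_{l ∈ S, l ≠ j} c_l + Σ_{l ∉ S} c_l = Σ_{l ≠ j} c_l` does not depend on `S`, negating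
the context vectors `c` and absorbing `t_iᵀ Σ_{l ≠ i} c_l` into the intercept `δ_i` turns
backward-dependent utilities into forward-dependent ones and vice versa, utility by utility. -/

theorem Finset.sum_erase_add_sum_compl {α M : Type*} [Fintype α] [DecidableEq α]
    [AddCommMonoid M] (f : α → M) {S : Finset α} {j : α} (hj : j ∈ S) :
    ∑ l ∈ S.erase j, f l + ∑ l ∈ Sᶜ, f l = ∑ l ∈ univ.erase j, f l := by
  rw [← sum_union (disjoint_compl_right.mono_left (erase_subset j S))]
  congr 1
  ext l
  by_cases hl : l = j <;> simp [hl, hj, em]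

def absorbedIntercept {𝒰 : Type*} [Fintype 𝒰] [DecidableEq 𝒰] {r : ℕ}
    (δ : 𝒰 → ℝ) (t c : 𝒰 → Fin r → ℝ) (i : 𝒰) : ℝ :=
  δ i + ∑ k, t i k * ∑ l ∈ univ.erase i, c l k

section Reflection

variable {𝒰 : Type*} [Fintype 𝒰] [DecidableEq 𝒰] {d r : ℕ}
  (δ : 𝒰 → ℝ) (β : Fin d → ℝ) (t c : 𝒰 → Fin r → ℝ) (x : 𝒰 → Fin d → ℝ)
  {S : Finset 𝒰} {j : 𝒰}

theorem VFlow_absorbedIntercept_neg (hj : j ∈ S) :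
    VFlow (absorbedIntercept δ t c) β t (-c) x S j = VBlow δ β t c x S j := by
  have split : ∀ k, ∑ l ∈ univ.erase j, c l k = ∑ l ∈ S.erase j, c l k + ∑ l ∈ Sᶜ, c l k :=
    fun k => (sum_erase_add_sum_compl (c · k) hj).symm
  simp only [VFlow, VBlow, absorbedIntercept, split, Pi.neg_apply, sum_neg_distrib, mul_add,
    mul_neg, sum_add_distrib]
  ring

theorem VBlow_absorbedIntercept_neg (hj : j ∈ S) :
    VBlow (absorbedIntercept δ t c) β t (-c) x S j = VFlow δ β t c x S j := by
  have split : ∀ k, ∑ l ∈ univ.erase j, c l k = ∑ l ∈ S.erase j, c l k + ∑ l ∈ Sᶜ, c l k :=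
    fun k => (sum_erase_add_sum_compl (c · k) hj).symm
  simp only [VFlow, VBlow, absorbedIntercept, split, Pi.neg_apply, sum_neg_distrib, mul_add,
    mul_neg, sum_add_distrib]
  ring

end Reflection

theorem exp_div_sum_exp_congr {α : Type*} {S : Finset α} {f g : α → ℝ}
    (h : ∀ k ∈ S, f k = g k) {j : α} (hj : j ∈ S) :
    Real.exp (f j) / ∑ k ∈ S, Real.exp (f k) = Real.exp (g j) / ∑ k ∈ S, Real.exp (g k) := by
  rw [h j hj, sum_congr rfl fun k hk => by rw [h k hk]]

/-- The forward- and backward-dependent factorized (low-rank) CDM model classes coincide: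
every forward-dependent parameter has a backward-dependent counterpart inducing identical
choice probabilities on all choice sets of size ≥ 2, and conversely. -/
theorem lowrank_cdm_model_classes_coincide
    (𝒰 : Type*) [Fintype 𝒰] [DecidableEq 𝒰] (d r : ℕ) :
    (∀ (δF : 𝒰 → ℝ) (βF : Fin d → ℝ) (tF cF : 𝒰 → Fin r → ℝ),
      ∃ (δB : 𝒰 → ℝ) (βB : Fin d → ℝ) (tB cB : 𝒰 → Fin r → ℝ),
        ∀ (x : 𝒰 → Fin d → ℝ) (S : Finset 𝒰), 2 ≤ S.card → ∀ j ∈ S,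
          Real.exp (VFlow δF βF tF cF x S j) / (∑ k ∈ S, Real.exp (VFlow δF βF tF cF x S k))
            = Real.exp (VBlow δB βB tB cB x S j) /
                (∑ k ∈ S, Real.exp (VBlow δB βB tB cB x S k))) ∧
    (∀ (δB : 𝒰 → ℝ) (βB : Fin d → ℝ) (tB cB : 𝒰 → Fin r → ℝ),
      ∃ (δF : 𝒰 → ℝ) (βF : Fin d → ℝ) (tF cF : 𝒰 → Fin r → ℝ),
        ∀ (x : 𝒰 → Fin d → ℝ) (S : Finset 𝒰), 2 ≤ S.card → ∀ j ∈ S,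
          Real.exp (VFlow δF βF tF cF x S j) / (∑ k ∈ S, Real.exp (VFlow δF βF tF cF x S k))
            = Real.exp (VBlow δB βB tB cB x S j) /
                (∑ k ∈ S, Real.exp (VBlow δB βB tB cB x S k))) := by
  constructor
  · intro δ β t c
    refine ⟨absorbedIntercept δ t c, β, t, -c, fun x S _ j hj => ?_⟩
    exact exp_div_sum_exp_congr
      (fun k hk => (VBlow_absorbedIntercept_neg δ β t c x hk).symm) hj
  · intro δ β t c
    refine ⟨absorbedIntercept δ t c, β, t, -c, fun x S _ j hj => ?_⟩
    exact exp_div_sum_exp_congr (fun k hk => VFlow_absorbedIntercept_neg δ β t c x hk) hj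
end
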